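/- Let N be a positive integer. There exists a finite set S of rational numbers contained in the open interval (−1, 1), with |S| = 2N, closed under negation (x ∈ S implies −x ∈ S), and satisfying Σ_{x∈S} x² = N and Σ_{x∈S} x⁴ = 3N/4, if and only if N is of the form 3k with k ≥ 1, or of the form 3k+1 with k ≥ 6, or of the form 3k+2 with k ≥ 3. -/

import Mathlib

/-!
Since `|S|` is even, `0 ∉ S`, so `S = T ∪ -T` where `T` consists of `N` rationals in `(0, 1)`
with `∑ x² = N / 2` and `∑ x⁴ = 3N / 8` (a half design).

Necessity: multiplying `T` by its least common denominator `c` gives integers `aₓ` with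
`2 ∑ a² = N c²` and `8 ∑ a⁴ = 3 N c⁴`, and some `aₓ` is odd if `c` is even. Let `r` be the number
of odd `aₓ`. Then `∑ a² ≡ r (mod 4)`, `∑ a⁴ ≡ r (mod 16)`, and if `r = N` then
`∑ (a² - 1)² ≡ 0 (mod 64)`. In each of the cases `c` odd, `c ≡ 2`, `c ≡ 0 (mod 4)`, these
congruences are incompatible with each of `N = 1, 2, 4, 5, 7, 8, 10, 13, 16`.

Sufficiency: for every `m`, the three points `1 - 6/(m²+3)` and `1/2 ± 3(m ∓ 1)/(m²+3)` form a
half design with `N = 3`. For `m ≥ 1000` these triples are pairwise disjoint and lie within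
`1/100` of `1/2` or `1`, so any number of them can be added to the empty set or to the explicit
half designs of sizes 11 and 19, which keep away from those points.
-/

open Finset Pointwise

section Antipodal

variable {α M : Type*} [AddCommGroup α] [LinearOrder α] [IsOrderedAddMonoid α] [AddCommMonoid M]
  {S T : Finset α}

lemma Finset.filter_not_pos_eq_neg_filter_pos (hS : ∀ x ∈ S, -x ∈ S) (h0 : (0 : α) ∉ S) :
    S.filter (fun x => ¬ 0 < x) = -S.filter (0 < ·) := by
  ext y
  simp only [mem_filter, mem_neg', Left.neg_pos_iff, not_lt]
  constructor
  · rintro ⟨hy, hy0⟩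
    exact ⟨hS y hy, lt_of_le_of_ne hy0 (by rintro rfl; exact h0 hy)⟩
  · rintro ⟨hy, hy0⟩
    exact ⟨by simpa using hS _ hy, hy0.le⟩

lemma Finset.sum_eq_two_nsmul_sum_filter_pos (hS : ∀ x ∈ S, -x ∈ S) (h0 : (0 : α) ∉ S)
    {f : α → M} (hf : ∀ x, f (-x) = f x) :
    ∑ x ∈ S, f x = 2 • ∑ x ∈ S.filter (0 < ·), f x := by
  rw [← sum_filter_add_sum_filter_not S (0 < ·), filter_not_pos_eq_neg_filter_pos hS h0,
    sum_neg_index]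
  simp [hf, two_nsmul]

lemma Finset.card_eq_two_mul_card_filter_pos (hS : ∀ x ∈ S, -x ∈ S) (h0 : (0 : α) ∉ S) :
    #S = 2 * #(S.filter (0 < ·)) := by
  simpa using sum_eq_two_nsmul_sum_filter_pos hS h0 (f := fun _ => (1 : ℕ)) fun _ => rfl

lemma Finset.zero_notMem_of_even_card (hS : ∀ x ∈ S, -x ∈ S) (hS2 : Even #S) : (0 : α) ∉ S := by
  intro h0
  have hS' : ∀ x ∈ S.erase 0, -x ∈ S.erase 0 := fun x hx =>
    mem_erase.mpr ⟨neg_ne_zero.mpr (ne_of_mem_erase hx), hS x (mem_of_mem_erase hx)⟩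
  have := card_eq_two_mul_card_filter_pos hS' (notMem_erase 0 S)
  rw [card_erase_of_mem h0] at this
  have hpos : 0 < #S := card_pos.mpr ⟨0, h0⟩
  exact Nat.not_even_iff_odd.mpr ⟨#((S.erase 0).filter (0 < ·)), by omega⟩ hS2

lemma Finset.filter_pos_union_neg (hT : ∀ x ∈ T, 0 < x) : (T ∪ -T).filter (0 < ·) = T := by
  ext x
  simp only [mem_filter, mem_union, mem_neg']
  constructor
  · rintro ⟨hx | hx, hx0⟩
    · exact hx
    · exact absurd (hT _ hx) (by simpa using hx0.le)
  · exact fun hx => ⟨Or.inl hx, hT x hx⟩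

end Antipodal

lemma Finset.sum_pow_eq_two_mul_sum_filter_pos {R : Type*} [Ring R] [LinearOrder R]
    [IsOrderedRing R] {S : Finset R} (hS : ∀ x ∈ S, -x ∈ S) (h0 : (0 : R) ∉ S) {n : ℕ}
    (hn : Even n) : ∑ x ∈ S, x ^ n = 2 * ∑ x ∈ S.filter (0 < ·), x ^ n := by
  rw [sum_eq_two_nsmul_sum_filter_pos hS h0 (f := (· ^ n)) (hn.neg_pow ·), two_nsmul, two_mul]

def IsHalfDesign (T : Finset ℚ) (N : ℕ) : Prop :=
  (∀ x ∈ T, 0 < x ∧ x < 1) ∧ #T = N ∧ ∑ x ∈ T, x ^ 2 = N / 2 ∧ ∑ x ∈ T, x ^ 4 = 3 * N / 8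

lemma isHalfDesign_filter_pos {S : Finset ℚ} {N : ℕ} (hbd : ∀ x ∈ S, -1 < x ∧ x < 1)
    (hcard : #S = 2 * N) (hS : ∀ x ∈ S, -x ∈ S) (h2 : ∑ x ∈ S, x ^ 2 = N)
    (h4 : ∑ x ∈ S, x ^ 4 = 3 * N / 4) : IsHalfDesign (S.filter (0 < ·)) N := by
  have h0 := zero_notMem_of_even_card hS ⟨N, by omega⟩
  refine ⟨fun x hx => ?_, ?_, ?_, ?_⟩
  · rw [mem_filter] at hx
    exact ⟨hx.2, (hbd x hx.1).2⟩
  · have := card_eq_two_mul_card_filter_pos hS h0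
    omega
  · linarith [sum_pow_eq_two_mul_sum_filter_pos hS h0 even_two]
  · linarith [sum_pow_eq_two_mul_sum_filter_pos hS h0 (n := 4) (by decide)]

lemma IsHalfDesign.exists_design {T : Finset ℚ} {N : ℕ} (hT : IsHalfDesign T N) :
    ∃ S : Finset ℚ, (∀ x ∈ S, -1 < x ∧ x < 1) ∧ #S = 2 * N ∧ (∀ x ∈ S, -x ∈ S) ∧
      ∑ x ∈ S, x ^ 2 = N ∧ ∑ x ∈ S, x ^ 4 = 3 * N / 4 := by
  obtain ⟨hbd, hcard, h2, h4⟩ := hT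
  have hS : ∀ x ∈ T ∪ -T, -x ∈ T ∪ -T := fun x hx => by
    simp only [mem_union, mem_neg', neg_neg] at hx ⊢
    exact hx.symm
  have h0 : (0 : ℚ) ∉ T ∪ -T := by
    simpa [mem_neg'] using fun h => (hbd 0 h).1.false
  have hpos := filter_pos_union_neg fun x hx => (hbd x hx).1
  refine ⟨T ∪ -T, fun x hx => ?_, ?_, hS, ?_, ?_⟩
  · rcases mem_union.mp hx with hx | hx
    · constructor <;> linarith [hbd x hx]
    · constructor <;> linarith [hbd _ (mem_neg'.mp hx)]
  · rw [card_eq_two_mul_card_filter_pos hS h0, hpos, hcard]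
  · rw [sum_pow_eq_two_mul_sum_filter_pos hS h0 even_two, hpos, h2]
    ring
  · rw [sum_pow_eq_two_mul_sum_filter_pos hS h0 (by decide), hpos, h4]
    ring

lemma IsHalfDesign.union {T T' : Finset ℚ} {N N' : ℕ} (hT : IsHalfDesign T N)
    (hT' : IsHalfDesign T' N') (hd : Disjoint T T') : IsHalfDesign (T ∪ T') (N + N') := by
  obtain ⟨hbd, hc, h2, h4⟩ := hT
  obtain ⟨hbd', hc', h2', h4'⟩ := hT'
  refine ⟨fun x hx => (mem_union.mp hx).elim (hbd x) (hbd' x), ?_, ?_, ?_⟩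
  · rw [card_union_of_disjoint hd, hc, hc']
  · rw [sum_union hd, h2, h2']
    push_cast
    ring
  · rw [sum_union hd, h4, h4']
    push_cast
    ring

lemma Rat.den_dvd_of_mul_eq_intCast {q : ℚ} {n : ℕ} {z : ℤ} (hn : n ≠ 0) (h : q * n = z) :
    q.den ∣ n := by
  have hq : q = z / n := by
    rw [← h, mul_div_cancel_right₀ _ (Nat.cast_ne_zero.mpr hn)]
  have := Rat.den_dvd z n
  rw [Rat.divInt_eq_div, Int.cast_natCast, ← hq] at this
  exact_mod_cast this

lemma Rat.num_mul_natCast_of_den_dvd {q : ℚ} {n : ℕ} (h : q.den ∣ n) :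
    ((q * n).num : ℚ) = q * n := by
  obtain ⟨t, rfl⟩ := h
  rw [Nat.cast_mul, ← mul_assoc, Rat.mul_den_eq_num, ← Int.cast_natCast t, ← Int.cast_mul,
    Rat.num_intCast]

lemma Finset.exists_primitive_common_denominator (P : Finset ℚ) :
    ∃ c : ℕ, (∀ x ∈ P, ((x * c).num : ℚ) = x * c) ∧
      ∀ p : ℕ, 1 < p → p ∣ c → ∃ x ∈ P, ¬ (p : ℤ) ∣ (x * c).num := by
  set c := P.lcm Rat.den
  have hc : 0 < c := Nat.pos_of_ne_zero (by simp [c, Finset.lcm_eq_zero_iff])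
  refine ⟨c, fun x hx => Rat.num_mul_natCast_of_den_dvd (Finset.dvd_lcm hx), ?_⟩
  rintro p hp ⟨c', hc'⟩
  by_contra! hall
  have hc'0 : c' ≠ 0 := by rintro rfl; omega
  have hdvd : c ∣ c' := Finset.lcm_dvd fun x hx => by
    obtain ⟨z, hz⟩ := hall x hx
    refine Rat.den_dvd_of_mul_eq_intCast hc'0 (z := z) ?_
    have hp0 : (p : ℚ) ≠ 0 := by positivity
    have := Rat.num_mul_natCast_of_den_dvd (n := c) (Finset.dvd_lcm hx)
    rw [hz, hc'] at this
    push_cast at this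
    exact mul_left_cancel₀ hp0 (by linear_combination -this)
  have := Nat.le_of_dvd (Nat.pos_of_ne_zero hc'0) hdvd
  nlinarith

lemma Int.sixteen_dvd_pow_four_sub_one_of_odd {a : ℤ} (ha : Odd a) : 16 ∣ a ^ 4 - 1 := by
  have h2 : 2 ∣ a ^ 2 + 1 := by
    rw [← even_iff_two_dvd]
    exact (ha.pow).add_one
  simpa [show a ^ 4 - 1 = (a ^ 2 - 1) * (a ^ 2 + 1) by ring] using
    mul_dvd_mul (Int.eight_dvd_sq_sub_one_of_odd ha) h2

lemma Int.four_dvd_sq_sub_emod_two (a : ℤ) : 4 ∣ a ^ 2 - a % 2 := by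
  rcases Int.even_or_odd' a with ⟨k, rfl | rfl⟩
  · rw [Int.mul_emod_right]
    exact ⟨k ^ 2, by ring⟩
  · have := Int.eight_dvd_sq_sub_one_of_odd (odd_two_mul_add_one k)
    omega

lemma Int.sixteen_dvd_pow_four_sub_emod_two (a : ℤ) : 16 ∣ a ^ 4 - a % 2 := by
  rcases Int.even_or_odd' a with ⟨k, rfl | rfl⟩
  · rw [Int.mul_emod_right]
    exact ⟨k ^ 4, by ring⟩
  · have := Int.sixteen_dvd_pow_four_sub_one_of_odd (odd_two_mul_add_one k)
    omega

lemma Int.sq_pow_four_dvd_cases (c : ℤ) :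
    (8 ∣ c ^ 2 - 1 ∧ 16 ∣ c ^ 4 - 1) ∨ (2 ∣ c ∧ 32 ∣ c ^ 2 - 4 ∧ 256 ∣ c ^ 4 - 16) ∨
      (4 ∣ c ∧ 16 ∣ c ^ 2 ∧ 256 ∣ c ^ 4) := by
  rcases Int.even_or_odd c with ⟨d, rfl⟩ | hc
  · rcases Int.even_or_odd d with ⟨e, rfl⟩ | hd
    · exact Or.inr <| Or.inr ⟨⟨e, by ring⟩, ⟨e ^ 2, by ring⟩, ⟨e ^ 4, by ring⟩⟩
    · refine Or.inr <| Or.inl ⟨⟨d, by ring⟩, ?_, ?_⟩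
      · simpa [show (d + d) ^ 2 - 4 = 4 * (d ^ 2 - 1) by ring] using
          mul_dvd_mul_left 4 (Int.eight_dvd_sq_sub_one_of_odd hd)
      · simpa [show (d + d) ^ 4 - 16 = 16 * (d ^ 4 - 1) by ring] using
          mul_dvd_mul_left 16 (Int.sixteen_dvd_pow_four_sub_one_of_odd hd)
  · exact Or.inl ⟨Int.eight_dvd_sq_sub_one_of_odd hc, Int.sixteen_dvd_pow_four_sub_one_of_odd hc⟩

lemma sixty_four_dvd_sum_of_forall_odd {ι : Type*} {s : Finset ι} {f : ι → ℤ}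
    (hodd : ∀ i ∈ s, Odd (f i)) : 64 ∣ ∑ i ∈ s, f i ^ 4 - 2 * ∑ i ∈ s, f i ^ 2 + #s := by
  have : ∑ i ∈ s, (f i ^ 2 - 1) ^ 2 = ∑ i ∈ s, f i ^ 4 - 2 * ∑ i ∈ s, f i ^ 2 + #s := by
    simp only [show ∀ i, (f i ^ 2 - 1) ^ 2 = f i ^ 4 - 2 * f i ^ 2 + 1 from fun i => by ring,
      sum_add_distrib, sum_sub_distrib, ← mul_sum, sum_const, nsmul_one]
  rw [← this]
  exact dvd_sum fun i hi => by
    simpa using pow_dvd_pow_of_dvd (Int.eight_dvd_sq_sub_one_of_odd (hodd i hi)) 2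

def exceptionalSizes : Finset ℕ := {1, 2, 4, 5, 7, 8, 10, 13, 16}

lemma mem_exceptionalSizes {N : ℕ} (hN : 0 < N)
    (h : ¬ ((∃ k : ℕ, 1 ≤ k ∧ N = 3 * k) ∨ (∃ k : ℕ, 6 ≤ k ∧ N = 3 * k + 1) ∨
      (∃ k : ℕ, 3 ≤ k ∧ N = 3 * k + 2))) : N ∈ exceptionalSizes := by
  simp only [not_or, not_exists, not_and] at h
  obtain ⟨h0, h1, h2⟩ := h
  have := h0 (N / 3)
  have := h1 (N / 3)
  have := h2 (N / 3)
  simp only [exceptionalSizes, mem_insert, mem_singleton]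
  omega

lemma notMem_exceptionalSizes {ι : Type*} {s : Finset ι} {f : ι → ℤ} {N : ℕ} {c : ℤ}
    (hcard : #s = N) (h2 : 2 * ∑ i ∈ s, f i ^ 2 = N * c ^ 2)
    (h4 : 8 * ∑ i ∈ s, f i ^ 4 = 3 * N * c ^ 4) (hprim : 2 ∣ c → ∃ i ∈ s, ¬ 2 ∣ f i) :
    N ∉ exceptionalSizes := by
  -- the number of `i` with `f i` odd
  set r := ∑ i ∈ s, f i % 2
  have hr2 : 4 ∣ ∑ i ∈ s, f i ^ 2 - r := by
    rw [← sum_sub_distrib]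
    exact dvd_sum fun i _ => Int.four_dvd_sq_sub_emod_two (f i)
  have hr4 : 16 ∣ ∑ i ∈ s, f i ^ 4 - r := by
    rw [← sum_sub_distrib]
    exact dvd_sum fun i _ => Int.sixteen_dvd_pow_four_sub_emod_two (f i)
  have hle : ∀ i ∈ s, f i % 2 ≤ 1 := fun i _ => by omega
  have hr0 : 0 ≤ r := sum_nonneg fun i _ => Int.emod_nonneg _ two_ne_zero
  have hrN : r ≤ N := by
    simpa [hcard] using sum_le_sum hle
  have hall : r = N → 64 ∣ ∑ i ∈ s, f i ^ 4 - 2 * ∑ i ∈ s, f i ^ 2 + N := fun h => by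
    simpa [hcard] using sixty_four_dvd_sum_of_forall_odd fun i hi =>
      Int.odd_iff.mpr ((sum_eq_sum_iff_of_le hle).mp (by simpa [hcard] using h) i hi)
  have hpos : 2 ∣ c → 0 < r := fun hc => by
    obtain ⟨i, hi, hodd⟩ := hprim hc
    have := single_le_sum (fun j _ => Int.emod_nonneg (f j) two_ne_zero) hi
    omega
  intro hN
  simp only [exceptionalSizes, mem_insert, mem_singleton] at hN
  rcases Int.sq_pow_four_dvd_cases c with hc | hc | hc <;>
    rcases hN with rfl | rfl | rfl | rfl | rfl | rfl | rfl | rfl | rfl <;> omega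

lemma not_isHalfDesign_of_mem_exceptionalSizes {T : Finset ℚ} {N : ℕ} (hN : N ∈ exceptionalSizes) :
    ¬ IsHalfDesign T N := by
  rintro ⟨-, hcard, h2, h4⟩
  obtain ⟨c, hnum, hprim⟩ := T.exists_primitive_common_denominator
  have hsum (n : ℕ) : ∑ x ∈ T, ((x * c).num : ℚ) ^ n = (∑ x ∈ T, x ^ n) * c ^ n := by
    rw [sum_mul]
    exact sum_congr rfl fun x hx => by rw [hnum x hx, mul_pow]
  refine notMem_exceptionalSizes (f := fun x : ℚ => (x * c).num) (c := c) hcard ?_ ?_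
    (fun h2c => hprim 2 one_lt_two (Int.natCast_dvd_natCast.mp h2c)) hN
  · qify
    rw [hsum, h2]
    ring
  · qify
    rw [hsum, h4]
    ring

def blockNearOne (m : ℚ) : ℚ := 1 - 6 / (m ^ 2 + 3)
def blockAboveHalf (m : ℚ) : ℚ := 1 / 2 + 3 * (m - 1) / (m ^ 2 + 3)
def blockBelowHalf (m : ℚ) : ℚ := 1 / 2 - 3 * (m + 1) / (m ^ 2 + 3)

def block (m : ℚ) : Finset ℚ := {blockNearOne m, blockAboveHalf m, blockBelowHalf m}

section Block

variable {m m' : ℚ}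

lemma blockNearOne_bounds (hm : 1000 ≤ m) : 99 / 100 < blockNearOne m ∧ blockNearOne m < 1 := by
  have hD : 0 < m ^ 2 + 3 := by positivity
  constructor
  · rw [blockNearOne, lt_sub_comm, div_lt_iff₀ hD]
    nlinarith
  · rw [blockNearOne, sub_lt_self_iff]
    positivity

lemma blockAboveHalf_bounds (hm : 1000 ≤ m) :
    1 / 2 < blockAboveHalf m ∧ blockAboveHalf m < 51 / 100 := by
  have hD : 0 < m ^ 2 + 3 := by positivity
  constructor
  · rw [blockAboveHalf, lt_add_iff_pos_right]
    exact div_pos (by linarith) hD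
  · rw [blockAboveHalf, ← lt_sub_iff_add_lt', div_lt_iff₀ hD]
    nlinarith

lemma blockBelowHalf_bounds (hm : 1000 ≤ m) :
    49 / 100 < blockBelowHalf m ∧ blockBelowHalf m < 1 / 2 := by
  have hD : 0 < m ^ 2 + 3 := by positivity
  constructor
  · rw [blockBelowHalf, lt_sub_comm, div_lt_iff₀ hD]
    nlinarith
  · rw [blockBelowHalf, sub_lt_self_iff]
    exact div_pos (by linarith) hD

lemma eq_of_blockNearOne_eq (hm : 0 ≤ m) (hm' : 0 ≤ m')
    (h : blockNearOne m = blockNearOne m') : m = m' := by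
  rw [blockNearOne, blockNearOne, sub_right_inj,
    div_eq_div_iff (by positivity) (by positivity)] at h
  nlinarith

lemma eq_of_blockAboveHalf_eq (hm : 3 < m) (hm' : 3 < m')
    (h : blockAboveHalf m = blockAboveHalf m') : m = m' := by
  rw [blockAboveHalf, blockAboveHalf, add_right_inj,
    div_eq_div_iff (by positivity) (by positivity)] at h
  have : (m - m') * (m * m' - m - m' - 3) = 0 := by linear_combination -h / 3
  rcases mul_eq_zero.mp this with h0 | h0
  · linarith
  · nlinarith

lemma eq_of_blockBelowHalf_eq (hm : 1 < m) (hm' : 1 < m')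
    (h : blockBelowHalf m = blockBelowHalf m') : m = m' := by
  rw [blockBelowHalf, blockBelowHalf, sub_right_inj,
    div_eq_div_iff (by positivity) (by positivity)] at h
  have : (m - m') * (m * m' + m + m' - 3) = 0 := by linear_combination -h / 3
  rcases mul_eq_zero.mp this with h0 | h0
  · linarith
  · nlinarith

lemma isHalfDesign_block (hm : 1000 ≤ m) : IsHalfDesign (block m) 3 := by
  have h1 := blockNearOne_bounds hm
  have h2 := blockAboveHalf_bounds hm
  have h3 := blockBelowHalf_bounds hm
  have hD : m ^ 2 + 3 ≠ 0 := by positivity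
  have hn1 : blockNearOne m ∉ ({blockAboveHalf m, blockBelowHalf m} : Finset ℚ) := by
    simp only [mem_insert, mem_singleton, not_or]
    constructor <;> intro h <;> linarith
  have hn2 : blockAboveHalf m ∉ ({blockBelowHalf m} : Finset ℚ) := by
    rw [mem_singleton]
    intro h
    linarith
  refine ⟨?_, ?_, ?_, ?_⟩
  · simp only [block, mem_insert, mem_singleton]
    rintro x (rfl | rfl | rfl) <;> constructor <;> linarith
  · rw [block, card_insert_of_notMem hn1, card_insert_of_notMem hn2, card_singleton]
  · rw [block, sum_insert hn1, sum_insert hn2, sum_singleton, blockNearOne, blockAboveHalf,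
      blockBelowHalf]
    field_simp
    ring
  · rw [block, sum_insert hn1, sum_insert hn2, sum_singleton, blockNearOne, blockAboveHalf,
      blockBelowHalf]
    field_simp
    ring

def NearHalfOrOne (x : ℚ) : Prop := |x - 1 / 2| < 1 / 100 ∨ 99 / 100 < x

lemma nearHalfOrOne_of_mem_block (hm : 1000 ≤ m) {x : ℚ} (hx : x ∈ block m) :
    NearHalfOrOne x := by
  have h1 := blockNearOne_bounds hm
  have h2 := blockAboveHalf_bounds hm
  have h3 := blockBelowHalf_bounds hm
  simp only [block, mem_insert, mem_singleton] at hx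
  rcases hx with rfl | rfl | rfl
  · exact Or.inr h1.1
  · exact Or.inl (abs_lt.mpr ⟨by linarith, by linarith⟩)
  · exact Or.inl (abs_lt.mpr ⟨by linarith, by linarith⟩)

lemma disjoint_block (hm : 1000 ≤ m) (hm' : 1000 ≤ m') (hne : m ≠ m') :
    Disjoint (block m) (block m') := by
  have := blockNearOne_bounds hm
  have := blockAboveHalf_bounds hm
  have := blockBelowHalf_bounds hm
  have := blockNearOne_bounds hm'
  have := blockAboveHalf_bounds hm'
  have := blockBelowHalf_bounds hm'
  rw [disjoint_left]
  intro x hx hx'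
  simp only [block, mem_insert, mem_singleton] at hx hx'
  rcases hx with rfl | rfl | rfl <;> rcases hx' with h | h | h
  all_goals first
    | exact hne (eq_of_blockNearOne_eq (by linarith) (by linarith) h)
    | exact hne (eq_of_blockAboveHalf_eq (by linarith) (by linarith) h)
    | exact hne (eq_of_blockBelowHalf_eq (by linarith) (by linarith) h)
    | linarith

end Block

def blocks (k : ℕ) : Finset ℚ := (range k).biUnion fun j => block (1000 + j)

lemma nearHalfOrOne_of_mem_blocks {k : ℕ} {x : ℚ} (hx : x ∈ blocks k) : NearHalfOrOne x := by
  obtain ⟨j, -, hj⟩ := mem_biUnion.mp hx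
  exact nearHalfOrOne_of_mem_block (by simp) hj

lemma isHalfDesign_blocks (k : ℕ) : IsHalfDesign (blocks k) (3 * k) := by
  induction k with
  | zero => simp [blocks, IsHalfDesign]
  | succ k ih =>
    have hd : Disjoint (block (1000 + k)) (blocks k) := by
      refine (disjoint_biUnion_right _ _ _).mpr fun j hj => disjoint_block (by simp) (by simp) ?_
      have : (j : ℚ) < k := by exact_mod_cast mem_range.mp hj
      intro h
      linarith
    rw [blocks, range_add_one, biUnion_insert, show 3 * (k + 1) = 3 + 3 * k by ring]
    exact (isHalfDesign_block (by simp)).union ih hd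

lemma IsHalfDesign.union_blocks {B : Finset ℚ} {N : ℕ} (hB : IsHalfDesign B N)
    (hfar : ∀ x ∈ B, ¬ NearHalfOrOne x) (k : ℕ) : IsHalfDesign (B ∪ blocks k) (N + 3 * k) :=
  hB.union (isHalfDesign_blocks k)
    (disjoint_left.mpr fun _ hx hx' => hfar _ hx (nearHalfOrOne_of_mem_blocks hx'))

def halfDesign11 : Finset ℚ :=
  {7 / 78, 12 / 78, 22 / 78, 28 / 78, 58 / 78, 59 / 78, 64 / 78, 68 / 78, 72 / 78, 74 / 78, 76 / 78}

def halfDesign19 : Finset ℚ :=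
  {12 / 90, 14 / 90, 16 / 90, 18 / 90, 30 / 90, 36 / 90, 46 / 90, 54 / 90, 60 / 90, 66 / 90,
    70 / 90, 76 / 90, 78 / 90, 80 / 90, 84 / 90, 86 / 90, 87 / 90, 88 / 90, 89 / 90}

lemma isHalfDesign_halfDesign11 : IsHalfDesign halfDesign11 11 := by
  refine ⟨?_, ?_, ?_, ?_⟩
  · simp only [halfDesign11, mem_insert, mem_singleton, forall_eq_or_imp, forall_eq]
    norm_num
  · rw [halfDesign11]; norm_num
  · norm_num [halfDesign11]
  · norm_num [halfDesign11]

lemma not_nearHalfOrOne_of_mem_halfDesign11 : ∀ x ∈ halfDesign11, ¬ NearHalfOrOne x := by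
  simp only [halfDesign11, NearHalfOrOne, mem_insert, mem_singleton, forall_eq_or_imp, forall_eq]
  norm_num [abs_of_pos, abs_of_neg]

lemma isHalfDesign_halfDesign19 : IsHalfDesign halfDesign19 19 := by
  refine ⟨?_, ?_, ?_, ?_⟩
  · simp only [halfDesign19, mem_insert, mem_singleton, forall_eq_or_imp, forall_eq]
    norm_num
  · rw [halfDesign19]; norm_num
  · norm_num [halfDesign19]
  · norm_num [halfDesign19]

lemma not_nearHalfOrOne_of_mem_halfDesign19 : ∀ x ∈ halfDesign19, ¬ NearHalfOrOne x := by
  simp only [halfDesign19, NearHalfOrOne, mem_insert, mem_singleton, forall_eq_or_imp, forall_eq]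
  norm_num [abs_of_pos, abs_of_neg]

lemma exists_isHalfDesign {N : ℕ}
    (h : (∃ k : ℕ, 1 ≤ k ∧ N = 3 * k) ∨ (∃ k : ℕ, 6 ≤ k ∧ N = 3 * k + 1) ∨
      (∃ k : ℕ, 3 ≤ k ∧ N = 3 * k + 2)) : ∃ T, IsHalfDesign T N := by
  rcases h with ⟨k, -, rfl⟩ | ⟨k, hk, rfl⟩ | ⟨k, hk, rfl⟩
  · exact ⟨_, isHalfDesign_blocks k⟩
  · rw [show 3 * k + 1 = 19 + 3 * (k - 6) by omega]
    exact ⟨_, isHalfDesign_halfDesign19.union_blocks not_nearHalfOrOne_of_mem_halfDesign19 _⟩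
  · rw [show 3 * k + 2 = 11 + 3 * (k - 3) by omega]
    exact ⟨_, isHalfDesign_halfDesign11.union_blocks not_nearHalfOrOne_of_mem_halfDesign11 _⟩

/-- Theorem 1.4: there exists an antipodal 5-design with `2N` rational points for the
Chebyshev measure iff `N = 3k (k ≥ 1)`, `N = 3k+1 (k ≥ 6)`, or `N = 3k+2 (k ≥ 3)`. -/
theorem stmt_5 (N : ℕ) (hN : 0 < N) :
    (∃ S : Finset ℚ, (∀ x ∈ S, -1 < x ∧ x < 1) ∧ S.card = 2 * N ∧
      (∀ x ∈ S, -x ∈ S) ∧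
      ∑ x ∈ S, x ^ 2 = (N : ℚ) ∧ ∑ x ∈ S, x ^ 4 = 3 * (N : ℚ) / 4) ↔
    ((∃ k : ℕ, 1 ≤ k ∧ N = 3 * k) ∨ (∃ k : ℕ, 6 ≤ k ∧ N = 3 * k + 1) ∨
      (∃ k : ℕ, 3 ≤ k ∧ N = 3 * k + 2)) := by
  constructor
  · rintro ⟨S, hbd, hcard, hS, h2, h4⟩
    by_contra h
    exact not_isHalfDesign_of_mem_exceptionalSizes (mem_exceptionalSizes hN h)
      (isHalfDesign_filter_pos hbd hcard hS h2 h4)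
  · intro h
    obtain ⟨T, hT⟩ := exists_isHalfDesign h
    exact hT.exists_design
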